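/- arXiv:1402.2446 — 4 statements merged into one kernel-verified Lean document; each statement's English description precedes it below -/
import Mathlib

section
/- Conversely, suppose V : S → Set S assigns to each element of a finite nonempty set S a subset satisfying self-inclusion (i ∈ V(i)), containment (V(i) ⊆ V(j) or V(j) ⊆ V(i) for all i, j), and immediacy (i ∈ V(j) implies V(i) ⊆ V(j)). Then there is an ordered partition S = S¹ ∪ ⋯ ∪ Sᵐ such that for each i in block Sᵏ, V(i) = S¹ ∪ ⋯ ∪ Sᵏ. -/
/-- Converse characterization: any family of views on a finite nonempty set
satisfying self-inclusion, containment, and immediacy arises from an ordered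
partition: there are nonempty pairwise disjoint blocks `B 0, …, B (m-1)`
covering everything, with `i ∈ B (k i)`, such that `V i` is exactly the union
of block `k i` and all earlier blocks. -/
theorem IS_views_come_from_orderedPartition
    {α : Type*} [Fintype α] [DecidableEq α] [Nonempty α]
    (V : α → Finset α)
    (hself : ∀ i, i ∈ V i)
    (hcontain : ∀ i j, V i ⊆ V j ∨ V j ⊆ V i)
    (himm : ∀ i j, i ∈ V j → V i ⊆ V j) :
    ∃ (m : ℕ) (B : Fin m → Finset α) (k : α → Fin m),
      (∀ l, (B l).Nonempty) ∧
      (∀ l l', l ≠ l' → Disjoint (B l) (B l')) ∧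
      (∀ i : α, ∃ l, i ∈ B l) ∧
      (∀ i, i ∈ B (k i)) ∧
      (∀ i, V i = (Finset.univ.filter (fun l => l ≤ k i)).biUnion B) := by
  classical
  set T : Finset (Finset α) := Finset.univ.image V with hT
  have hVT : ∀ i, V i ∈ T := fun i => Finset.mem_image_of_mem V (Finset.mem_univ i)
  have hcardinj : ∀ W ∈ T, ∀ W' ∈ T, W.card = W'.card → W = W' := by
    intro W hW W' hW' h
    obtain ⟨i, -, rfl⟩ := Finset.mem_image.mp hW
    obtain ⟨j, -, rfl⟩ := Finset.mem_image.mp hW'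
    rcases hcontain i j with hs | hs
    · exact Finset.eq_of_subset_of_card_le hs h.ge
    · exact (Finset.eq_of_subset_of_card_le hs h.le).symm
  set C : Finset ℕ := T.image Finset.card with hC
  set m := C.card with hm
  set o := C.orderIsoOfFin rfl with ho
  have hex : ∀ n ∈ C, ∃! W, W ∈ T ∧ W.card = n := by
    intro n hn
    obtain ⟨W, hW, rfl⟩ := Finset.mem_image.mp hn
    exact ⟨W, ⟨hW, rfl⟩, fun W' ⟨hW', h⟩ => hcardinj W' hW' W hW h⟩
  set g : Fin m → Finset α :=
    fun l => Finset.choose (fun W => W.card = (o l : ℕ)) T (hex _ (o l).2) with hg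
  have hgT : ∀ l, g l ∈ T := fun l => Finset.choose_mem _ _ _
  have hgcard : ∀ l, (g l).card = (o l : ℕ) :=
    fun l => Finset.choose_property (fun W => W.card = (o l : ℕ)) T (hex _ (o l).2)
  have hgV : ∀ W ∈ T, ∃ j, W = V j := by
    intro W hW
    obtain ⟨j, -, rfl⟩ := Finset.mem_image.mp hW
    exact ⟨j, rfl⟩
  -- the block index of i
  set k : α → Fin m :=
    fun i => o.symm ⟨(V i).card, Finset.mem_image_of_mem _ (hVT i)⟩ with hk
  have hgk : ∀ i, g (k i) = V i := by
    intro i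
    apply hcardinj _ (hgT _) _ (hVT i)
    rw [hgcard]
    simp [hk]
  -- monotonicity
  have hmono : ∀ l l' : Fin m, l ≤ l' → g l ⊆ g l' := by
    intro l l' hle
    have hcard : (g l).card ≤ (g l').card := by
      rw [hgcard, hgcard]
      exact Subtype.coe_le_coe.mpr (o.monotone hle)
    obtain ⟨i, hi⟩ := hgV _ (hgT l)
    obtain ⟨j, hj⟩ := hgV _ (hgT l')
    rcases hcontain i j with hs | hs
    · rw [hi, hj]; exact hs
    · have : g l' = g l := by
        apply Finset.eq_of_subset_of_card_le _ hcard
        rw [hi, hj]; exact hs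
      rw [this]
  -- key: if i ∈ g l then k i ≤ l
  have hkey : ∀ (i : α) (l : Fin m), i ∈ g l → k i ≤ l := by
    intro i l hil
    obtain ⟨j, hj⟩ := hgV _ (hgT l)
    have hsub : V i ⊆ V j := himm i j (by rwa [hj] at hil)
    have hcard : (g (k i)).card ≤ (g l).card := by
      rw [hgk, hj]; exact Finset.card_le_card hsub
    rw [hgcard, hgcard] at hcard
    exact o.le_iff_le.mp (Subtype.coe_le_coe.mp hcard)
  -- the blocks
  set B : Fin m → Finset α :=
    fun l => g l \ (Finset.univ.filter (fun l' => l' < l)).biUnion g with hB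
  have hBmem : ∀ (i : α) (l : Fin m), i ∈ B l ↔ i ∈ g l ∧ ∀ l' < l, i ∉ g l' := by
    intro i l
    simp [hB, Finset.mem_sdiff, Finset.mem_biUnion]
  have hBk : ∀ i, i ∈ B (k i) := by
    intro i
    rw [hBmem]
    refine ⟨by rw [hgk]; exact hself i, fun l' hl' hmem => ?_⟩
    exact absurd (hkey i l' hmem) (not_le.mpr hl')
  refine ⟨m, B, k, ?_, ?_, fun i => ⟨k i, hBk i⟩, hBk, ?_⟩
  · -- nonempty
    intro l
    obtain ⟨j, hj⟩ := hgV _ (hgT l)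
    refine ⟨j, (hBmem j l).mpr ⟨by rw [hj]; exact hself j, fun l' hl' hmem => ?_⟩⟩
    have hle : k j ≤ l' := hkey j l' hmem
    have hkj : k j = l := by
      have hc : (⟨(V j).card, Finset.mem_image_of_mem _ (hVT j)⟩ : {x // x ∈ C}) = o l :=
        Subtype.ext (by show (V j).card = (o l : ℕ); rw [← hj]; exact hgcard l)
      rw [hk]
      simp only
      rw [hc, OrderIso.symm_apply_apply]
    rw [hkj] at hle
    exact absurd hl' (not_lt.mpr hle)
  · -- disjoint
    intro l l' hne
    rcases lt_or_gt_of_ne hne with h | h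
    · refine Finset.disjoint_left.mpr fun x hx hx' => ?_
      exact ((hBmem x l').mp hx').2 l h ((hBmem x l).mp hx).1
    · refine Finset.disjoint_left.mpr fun x hx hx' => ?_
      exact ((hBmem x l).mp hx).2 l' h ((hBmem x l').mp hx').1
  · -- V i = union of blocks ≤ k i
    intro i
    ext x
    simp only [Finset.mem_biUnion, Finset.mem_filter, Finset.mem_univ, true_and]
    constructor
    · intro hx
      refine ⟨k x, ?_, hBk x⟩
      exact hkey x (k i) (by rwa [hgk])
    · rintro ⟨l, hl, hx⟩
      have : x ∈ g l := ((hBmem x l).mp hx).1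
      have := hmono l (k i) hl this
      rwa [hgk] at this
end

section
/- In the Borowsky–Gafni level-based immediate snapshot construction, at most ℓ processes ever reach level ℓ: formally, if n processes start at level n and at each level ℓ every process that takes a snapshot of the set of processes registered at level ℓ descends to level ℓ−1 only if it sees strictly fewer than ℓ registered processes, then for every ℓ ≤ n, the number of processes that ever register at level ℓ is at most ℓ. -/
/-- Borowsky–Gafni level invariant: `R ℓ` is the set of processes that ever
register at level `ℓ`; all `n` processes start at level `n`; each registered
process takes a snapshot `S p ℓ` of registered processes containing itself;
a process descends to level `ℓ-1` only if its snapshot has size `< ℓ`; and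
the last process to register at a nonempty level sees all of `R ℓ`.
Then at most `ℓ` processes ever reach level `ℓ`. -/
theorem BG_at_most_level_processes
    {P : Type*} [Fintype P] [DecidableEq P] (n : ℕ)
    (hcard : Fintype.card P = n)
    (R : ℕ → Finset P) (S : P → ℕ → Finset P)
    (hRn : R n = Finset.univ)
    (hselfmem : ∀ ℓ, ∀ p ∈ R ℓ, p ∈ S p ℓ)
    (hsub : ∀ ℓ, ∀ p ∈ R ℓ, S p ℓ ⊆ R ℓ)
    (hdesc : ∀ ℓ, 1 ≤ ℓ → ∀ q ∈ R (ℓ - 1), q ∈ R ℓ ∧ (S q ℓ).card < ℓ)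
    (hlast : ∀ ℓ, 1 ≤ ℓ → (R ℓ).Nonempty → ∃ p ∈ R ℓ, S p ℓ = R ℓ) :
    ∀ ℓ, 1 ≤ ℓ → ℓ ≤ n → (R ℓ).card ≤ ℓ := by
  -- Key step: R ℓ ⊆ R (ℓ+1) and the last process at level ℓ+1 does not descend
  have key : ∀ ℓ, 1 ≤ ℓ → (R (ℓ + 1)).card ≤ ℓ + 1 → (R ℓ).card ≤ ℓ := by
    intro ℓ hℓ hcard1
    rcases (R ℓ).eq_empty_or_nonempty with he | hne
    · simp [he]
    · have hsubR : R ℓ ⊆ R (ℓ + 1) := by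
        intro q hq
        exact (hdesc (ℓ + 1) (by omega) q (by simpa using hq)).1
      have hne1 : (R (ℓ + 1)).Nonempty := hne.mono hsubR
      obtain ⟨p, hp, hSp⟩ := hlast (ℓ + 1) (by omega) hne1
      by_cases hpl : p ∈ R ℓ
      · have := (hdesc (ℓ + 1) (by omega) p (by simpa using hpl)).2
        rw [hSp] at this
        exact le_trans (Finset.card_le_card hsubR) (by omega)
      · have hsub' : R ℓ ⊆ (R (ℓ + 1)).erase p := by
          intro q hq
          exact Finset.mem_erase.mpr ⟨fun h => hpl (h ▸ hq), hsubR hq⟩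
        have := Finset.card_le_card hsub'
        have he' : ((R (ℓ + 1)).erase p).card = (R (ℓ + 1)).card - 1 :=
          Finset.card_erase_of_mem hp
        omega
  intro ℓ hℓ hln
  obtain ⟨d, hd⟩ : ∃ d, ℓ + d = n := ⟨n - ℓ, by omega⟩
  clear hln
  induction d generalizing ℓ with
  | zero =>
    have hln : ℓ = n := by omega
    subst hln
    rw [hRn, Finset.card_univ, hcard]
  | succ d ih =>
    have h1 : (R (ℓ + 1)).card ≤ ℓ + 1 := ih (ℓ + 1) (by omega) (by omega)
    exact key ℓ hℓ h1
end

section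
/- For any IIS run E with round view functions Vᵣ on the infinitely-participating set P, and any i ∈ P: i is in the sink strongly connected component SC of G* if and only if there exists r₀ such that for all r ≥ r₀, every j ∈ Vᵣ(i) has a directed path to i in the graph G⁽ʳ⁾ = union of the round graphs Gₛ for s ≥ r (where Gₛ has edge (a,b) iff b ∈ Vₛ(a)). -/
/-!
An edge that occurs in only finitely many rounds stops occurring after some round, and since
there are finitely many edges, from some round `N` on every edge of a round graph is an edge of
`G*`. Conversely every edge of `G*` occurs in every tail graph `G⁽ʳ⁾`. So for `r ≥ N`, paths in
`G⁽ʳ⁾` and in `G*` are the same thing, and the theorem becomes a statement about `G*`: if `i ∈ SC`,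
each `j ∈ Vᵣ(i)` is a `G*`-successor of `i`, hence in `SC`, hence reaches `i`. If `i` is eventually
seen by its view, pick `a ∈ SC`: in a late round either `i ∈ V(a)`, or `a ∈ V(i)` and `a` reaches
`i`; either way `i` is `G*`-reachable from the sink `SC`.
-/

open Filter Relation

section LimitGraph

variable {α : Type*} (R : ℕ → α → α → Prop)

def tailRel (r : ℕ) (a b : α) : Prop := ∃ s, r ≤ s ∧ R s a b

def limitRel (a b : α) : Prop := {s | R s a b}.Infinite

variable {R}

theorem tailRel_of_limitRel (r : ℕ) {a b : α} (h : limitRel R a b) : tailRel R r a b :=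
  let ⟨s, hs, hr⟩ := h.exists_gt r
  ⟨s, hr.le, hs⟩

theorem eventually_limitRel_of_rel [Finite α] :
    ∀ᶠ s in atTop, ∀ a b, R s a b → limitRel R a b := by
  have hedge : ∀ e : α × α, ∀ᶠ s in atTop, R s e.1 e.2 → limitRel R e.1 e.2 := by
    intro e
    by_cases he : limitRel R e.1 e.2
    · exact .of_forall fun _ _ => he
    · rw [← Nat.cofinite_eq_atTop]
      exact (Set.not_infinite.mp he).eventually_cofinite_notMem.mono fun _ hs hR => absurd hR hs
  filter_upwards [eventually_all.mpr hedge] with s hs a b using hs (a, b)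

theorem limitRel_of_tailRel {r : ℕ} (hr : ∀ s ≥ r, ∀ a b, R s a b → limitRel R a b) {a b : α}
    (h : tailRel R r a b) : limitRel R a b :=
  let ⟨s, hs, hR⟩ := h
  hr s hs a b hR

end LimitGraph

theorem mem_or_mem_of_total {α β : Type*} {V : α → Set β} {f : α → β}
    (hself : ∀ a, f a ∈ V a) (htotal : ∀ a b, V a ⊆ V b ∨ V b ⊆ V a) (a b : α) :
    f a ∈ V b ∨ f b ∈ V a :=
  (htotal a b).imp (fun h => h (hself a)) (fun h => h (hself b))

theorem strongly_correct_iff_eventually_seen_general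
    {P : Type*} [Fintype P]
    (V : ℕ → P → Finset P)
    (hself : ∀ r i, i ∈ V r i)
    (hcontain : ∀ r i j, V r i ⊆ V r j ∨ V r j ⊆ V r i)
    (Gstar : P → P → Prop)
    (hG : ∀ a b, Gstar a b ↔ {s | b ∈ V s a}.Infinite)
    (SC : Set P)
    (hSCne : SC.Nonempty)
    (hSCconn : ∀ a ∈ SC, ∀ b ∈ SC, Relation.ReflTransGen Gstar a b)
    (hSCsink : ∀ a ∈ SC, ∀ v, Relation.ReflTransGen Gstar a v → v ∈ SC) :
    ∀ i : P, i ∈ SC ↔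
      ∃ r₀ : ℕ, ∀ r ≥ r₀, ∀ j ∈ V r i,
        Relation.ReflTransGen (fun a b => ∃ s, r ≤ s ∧ b ∈ V s a) j i := by
  obtain rfl : Gstar = limitRel fun s a b => b ∈ V s a := by
    funext a b
    exact propext (hG a b)
  obtain ⟨N, hN⟩ := eventually_atTop.mp (eventually_limitRel_of_rel (R := fun s a b => b ∈ V s a))
  intro i
  constructor
  · intro hi
    refine ⟨N, fun r hr j hj => ?_⟩
    have hjSC : j ∈ SC := hSCsink i hi j (.single (hN r hr i j hj))
    exact ReflTransGen.mono (fun _ _ => tailRel_of_limitRel r) _ _ (hSCconn j hjSC i hi)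
  · rintro ⟨r₀, hseen⟩
    obtain ⟨a, ha⟩ := hSCne
    set s := max r₀ N
    refine hSCsink a ha i ?_
    rcases mem_or_mem_of_total (hself s) (hcontain s) i a with hia | hai
    · exact .single (hN s (le_max_right _ _) a i hia)
    · exact ReflTransGen.mono
        (fun _ _ => limitRel_of_tailRel fun t ht => hN t ((le_max_right _ _).trans ht)) _ _
        (hseen s (le_max_left _ _) a hai)

/-- Proposition 1 (fast-graph-fast): for an IIS run with round views `V r`
on the infinitely-participating set `P`, a process `i` belongs to the sink
strongly connected component `SC` of the limit graph `G*` iff from some round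
`r₀` on, every process in `i`'s view has a directed path to `i` in the tail
graph `G⁽ʳ⁾ = ⋃_{s ≥ r} G_s` (where `G_s` has edge `(a,b)` iff `b ∈ V s a`). -/
theorem strongly_correct_iff_eventually_seen
    {P : Type*} [Fintype P] [DecidableEq P] [Nonempty P]
    (V : ℕ → P → Finset P)
    (hself : ∀ r i, i ∈ V r i)
    (hcontain : ∀ r i j, V r i ⊆ V r j ∨ V r j ⊆ V r i)
    (himm : ∀ r i j, i ∈ V r j → V r i ⊆ V r j)
    (Gstar : P → P → Prop)
    (hG : ∀ a b, Gstar a b ↔ {s | b ∈ V s a}.Infinite)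
    (SC : Set P)
    (hSCne : SC.Nonempty)
    (hSCconn : ∀ a ∈ SC, ∀ b ∈ SC, Relation.ReflTransGen Gstar a b)
    (hSCsink : ∀ a ∈ SC, ∀ v, Relation.ReflTransGen Gstar a v → v ∈ SC) :
    ∀ i : P, i ∈ SC ↔
      ∃ r₀ : ℕ, ∀ r ≥ r₀, ∀ j ∈ V r i,
        Relation.ReflTransGen (fun a b => ∃ s, r ≤ s ∧ b ∈ V s a) j i :=
  strongly_correct_iff_eventually_seen_general V hself hcontain Gstar hG SC hSCne hSCconn hSCsink
end

section
/- Monotone limit of view inclusions: suppose (Vᵣ) are round views on P satisfying the IS axioms and i ∈ P is such that the set Bᵣ = Vᵣ(i) eventually consists only of vertices of the sink component SC (i.e., ∃ r₀, ∀ r ≥ r₀, Vᵣ(i) ⊆ SC). If moreover i ∈ SC, then for every j ∈ P and every r ≥ r₀ there is a path from j to i in G⁽ʳ⁾ = ⋃_{s≥r} Gₛ. -/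
/-!
Either `i ∈ V r j`, which is already an edge `j → i` of `G_r`, or, the views of one round being
nested, `j ∈ V r i ⊆ SC`; then a `G*`-path from `j` to `i` inside `SC` lifts to `G⁽ʳ⁾`, because
every edge of `G*` occurs in infinitely many rounds, hence in some round `s ≥ r`.
-/

open Relation

theorem mem_of_not_mem_of_nested {P : Type*} {V : P → Finset P} (hself : ∀ i, i ∈ V i)
    (hcontain : ∀ i j, V i ⊆ V j ∨ V j ⊆ V i) {i j : P} (h : i ∉ V j) : j ∈ V i := by
  rcases hcontain i j with hij | hji
  · exact absurd (hij (hself i)) h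
  · exact hji (hself j)

theorem Relation.ReflTransGen.tail_of_infinite {α : Type*} {R : α → α → Prop}
    {E : ℕ → α → α → Prop}
    (hR : ∀ a b, R a b → {s | E s a b}.Infinite) (r : ℕ) {a b : α} (h : ReflTransGen R a b) :
    ReflTransGen (fun a b => ∃ s, r ≤ s ∧ E s a b) a b :=
  ReflTransGen.mono (fun x y hxy =>
    let ⟨s, hs, hrs⟩ := (hR x y hxy).exists_gt r
    ⟨s, hrs.le, hs⟩) a b h

theorem sink_membership_gives_tail_paths_general
    {P : Type*}
    (V : ℕ → P → Finset P)
    (hself : ∀ r i, i ∈ V r i)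
    (hcontain : ∀ r i j, V r i ⊆ V r j ∨ V r j ⊆ V r i)
    (Gstar : P → P → Prop)
    (hG : ∀ a b, Gstar a b ↔ {s | b ∈ V s a}.Infinite)
    (SC : Set P)
    (hSCconn : ∀ a ∈ SC, ∀ b ∈ SC, Relation.ReflTransGen Gstar a b)
    (i : P) (hi : i ∈ SC)
    (r₀ : ℕ) (hr₀ : ∀ r ≥ r₀, ∀ x ∈ V r i, x ∈ SC) :
    ∀ (j : P) (r : ℕ), r₀ ≤ r →
      Relation.ReflTransGen (fun a b => ∃ s, r ≤ s ∧ b ∈ V s a) j i := by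
  intro j r hr
  by_cases hji : i ∈ V r j
  · exact .single ⟨r, le_rfl, hji⟩
  · have hj : j ∈ SC := hr₀ r hr j (mem_of_not_mem_of_nested (hself r) (hcontain r) hji)
    exact (hSCconn j hj i hi).tail_of_infinite (fun a b => (hG a b).mp) r

/-- Forward direction of Proposition 1: if `i` is in the sink strongly
connected component `SC` of the limit graph `G*`, and from round `r₀` on the
view of `i` consists only of members of `SC`, then for every process `j` and
every `r ≥ r₀` there is a directed path from `j` to `i` in the tail graph
`G⁽ʳ⁾ = ⋃_{s ≥ r} G_s` (edge `(a,b)` of `G_s` iff `b ∈ V s a`). -/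
theorem sink_membership_gives_tail_paths
    {P : Type*} [Fintype P] [DecidableEq P] [Nonempty P]
    (V : ℕ → P → Finset P)
    (hself : ∀ r i, i ∈ V r i)
    (hcontain : ∀ r i j, V r i ⊆ V r j ∨ V r j ⊆ V r i)
    (himm : ∀ r i j, i ∈ V r j → V r i ⊆ V r j)
    (Gstar : P → P → Prop)
    (hG : ∀ a b, Gstar a b ↔ {s | b ∈ V s a}.Infinite)
    (SC : Set P)
    (hSCne : SC.Nonempty)
    (hSCconn : ∀ a ∈ SC, ∀ b ∈ SC, Relation.ReflTransGen Gstar a b)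
    (hSCsink : ∀ a ∈ SC, ∀ v, Relation.ReflTransGen Gstar a v → v ∈ SC)
    (i : P) (hi : i ∈ SC)
    (r₀ : ℕ) (hr₀ : ∀ r ≥ r₀, ∀ x ∈ V r i, x ∈ SC) :
    ∀ (j : P) (r : ℕ), r₀ ≤ r →
      Relation.ReflTransGen (fun a b => ∃ s, r ≤ s ∧ b ∈ V s a) j i :=
  sink_membership_gives_tail_paths_general V hself hcontain Gstar hG SC hSCconn i hi r₀ hr₀
end
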